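/- arXiv:1901.02813 — 2 statements merged into one kernel-verified Lean document; each statement's English description precedes it below -/
import Mathlib

section
/- Under the assumptions a₁, a₃, a₅ > 0, a₂a₄ > 0 and a₁a₅ − a₂a₄ > 0, every complex root λ of λ⁴ + (a₁ω² + a₃ω² + a₅)λ² + ω²[a₁a₃ω² + (a₁a₅ − a₂a₄)] = 0 (with real ω ≠ 0) is purely imaginary and nonzero. -/
lemma sq_eq_neg_real_aux (l : ℂ) (r : ℝ) (hr : r < 0) (h : l^2 = (r : ℂ)) :
    l.re = 0 ∧ l ≠ 0 := by
  have him : l.re * l.im + l.im * l.re = 0 := by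
    have := congrArg Complex.im h
    simpa [pow_two, Complex.mul_im, Complex.ofReal_im] using this
  have him' : l.re * l.im = 0 := by linarith
  have hre : l.re^2 - l.im^2 = r := by
    have := congrArg Complex.re h
    simpa [pow_two, Complex.mul_re, Complex.ofReal_re, sq] using this
  constructor
  · by_contra hx
    have : l.im = 0 := by
      rcases mul_eq_zero.mp him' with h' | h'
      · exact absurd h' hx
      · exact h'
    rw [this] at hre
    nlinarith [sq_nonneg l.re]
  · intro h0
    rw [h0] at h
    have : (r : ℂ) = 0 := by simpa using h.symm
    have : r = 0 := by exact_mod_cast this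
    linarith

theorem mindlin_roots_purely_imaginary
    (a₁ a₂ a₃ a₄ a₅ : ℝ)
    (h1 : 0 < a₁) (h3 : 0 < a₃) (h5 : 0 < a₅)
    (h24 : 0 < a₂ * a₄) (hpos : 0 < a₁ * a₅ - a₂ * a₄)
    (ω : ℝ) (hω : ω ≠ 0) (l : ℂ)
    (hroot : l^4 + ((a₁ * ω^2 + a₃ * ω^2 + a₅ : ℝ) : ℂ) * l^2
      + ((ω^2 * (a₁ * a₃ * ω^2 + (a₁ * a₅ - a₂ * a₄)) : ℝ) : ℂ) = 0) :
    l.re = 0 ∧ l ≠ 0 := by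
  set b : ℝ := a₁ * ω^2 + a₃ * ω^2 + a₅ with hb
  set c : ℝ := ω^2 * (a₁ * a₃ * ω^2 + (a₁ * a₅ - a₂ * a₄)) with hc
  have hω2 : 0 < ω^2 := by positivity
  have hbpos : 0 < b := by rw [hb]; positivity
  have hcpos : 0 < c := by
    rw [hc]
    have : 0 < a₁ * a₃ * ω^2 + (a₁ * a₅ - a₂ * a₄) := by
      have : 0 < a₁ * a₃ * ω^2 := by positivity
      linarith
    exact mul_pos hω2 this
  have hD : 0 < b^2 - 4*c := by
    have key : b^2 - 4*c = ((a₁ - a₃) * ω^2 - a₅)^2 + 4 * ω^2 * (a₂*a₄) := by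
      rw [hb, hc]; ring
    rw [key]
    have h4 : 0 < 4 * ω^2 * (a₂*a₄) := by positivity
    nlinarith [sq_nonneg ((a₁ - a₃) * ω^2 - a₅)]
  set s : ℝ := Real.sqrt (b^2 - 4*c) with hsdef
  have hs0 : 0 ≤ s := Real.sqrt_nonneg _
  have hs2 : s^2 = b^2 - 4*c := Real.sq_sqrt hD.le
  have hsb : s < b := by
    nlinarith
  have h2 : (2*l^2 + (b:ℂ) - (s:ℂ)) * (2*l^2 + (b:ℂ) + (s:ℂ)) = 0 := by
    have hs2' : ((s:ℂ))^2 = ((b:ℂ))^2 - 4*(c:ℂ) := by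
      exact_mod_cast congrArg (fun x : ℝ => (x : ℂ)) hs2
    linear_combination 4 * hroot - hs2'
  rcases mul_eq_zero.mp h2 with h' | h'
  · have hl2 : l^2 = (((s - b)/2 : ℝ) : ℂ) := by
      push_cast
      linear_combination h' / 2
    exact sq_eq_neg_real_aux l _ (by linarith) hl2
  · have hl2 : l^2 = (((-s - b)/2 : ℝ) : ℂ) := by
      push_cast
      linear_combination h' / 2
    exact sq_eq_neg_real_aux l _ (by linarith) hl2
end

section
/- Let a₁, a₃ > 0 and set c₁ = −a₂/(√a₁ + √a₃), c₂ = a₄/(√a₁ + √a₃). Define v = α + c₁χ and w = β + c₂u where α = u_t − √a₁ u_x, β = χ_t − √a₃ χ_x. Then smooth (u,χ) solve u_tt = a₁u_xx + a₂χ_x, χ_tt = a₃χ_xx − a₄u_x − a₅χ if and only if (u, χ, v, w) solve u_t = √a₁ u_x − c₁χ + v, χ_t = √a₃ χ_x − c₂u + w, v_t = −√a₁ v_x − c₁c₂u + c₁w, w_t = −√a₃ w_x − (c₁c₂ + a₅)χ + c₂v. -/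
noncomputable def dt (f : ℝ → ℝ → ℝ) : ℝ → ℝ → ℝ := fun t x => deriv (fun s => f s x) t

noncomputable def dx (f : ℝ → ℝ → ℝ) : ℝ → ℝ → ℝ := fun t x => deriv (fun y => f t y) x

open Function

noncomputable def pd (e : ℝ × ℝ) (F : ℝ × ℝ → ℝ) : ℝ × ℝ → ℝ := fun p => fderiv ℝ F p e

lemma pd_contDiff {F : ℝ × ℝ → ℝ} (hF : ContDiff ℝ (⊤ : ℕ∞) F) (e : ℝ × ℝ) :
    ContDiff ℝ (⊤ : ℕ∞) (pd e F) :=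
  (hF.fderiv_right (by simp)).clm_apply contDiff_const

lemma dt_eq {f : ℝ → ℝ → ℝ} (hf : ContDiff ℝ (⊤ : ℕ∞) (uncurry f)) (t x : ℝ) :
    dt f t x = pd (1, 0) (uncurry f) (t, x) := by
  have h : HasDerivAt (fun s : ℝ => (s, x)) ((1 : ℝ), (0 : ℝ)) t :=
    (hasDerivAt_id t).prodMk (hasDerivAt_const t x)
  exact ((hf.differentiable (by simp) (t, x)).hasFDerivAt.comp_hasDerivAt t h).deriv

lemma dx_eq {f : ℝ → ℝ → ℝ} (hf : ContDiff ℝ (⊤ : ℕ∞) (uncurry f)) (t x : ℝ) :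
    dx f t x = pd (0, 1) (uncurry f) (t, x) := by
  have h : HasDerivAt (fun y : ℝ => (t, y)) ((0 : ℝ), (1 : ℝ)) x :=
    (hasDerivAt_const x t).prodMk (hasDerivAt_id x)
  exact ((hf.differentiable (by simp) (t, x)).hasFDerivAt.comp_hasDerivAt x h).deriv

lemma pd_comm {F : ℝ × ℝ → ℝ} (hF : ContDiff ℝ (⊤ : ℕ∞) F) (e e' : ℝ × ℝ) (p : ℝ × ℝ) :
    pd e (pd e' F) p = pd e' (pd e F) p := by
  have hd : DifferentiableAt ℝ (fderiv ℝ F) p :=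
    (hF.fderiv_right (m := (⊤ : ℕ∞)) (by simp)).differentiable (by simp) p
  have key : ∀ a b : ℝ × ℝ, pd a (pd b F) p = fderiv ℝ (fderiv ℝ F) p a b := by
    intro a b
    have h1 : HasFDerivAt (fun q => fderiv ℝ F q b)
        ((ContinuousLinearMap.apply ℝ ℝ b).comp (fderiv ℝ (fderiv ℝ F) p)) p :=
      (ContinuousLinearMap.apply ℝ ℝ b).hasFDerivAt.comp p hd.hasFDerivAt
    have h2 : pd a (pd b F) p = fderiv ℝ (fun q => fderiv ℝ F q b) p a := rfl
    rw [h2, h1.fderiv]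
    rfl
  rw [key, key]
  exact (hF.contDiffAt.isSymmSndFDerivAt (by rw [minSmoothness_of_isRCLikeNormedField]; exact WithTop.coe_le_coe.mpr le_top)).eq e e'

lemma pd_comb {A B C : ℝ × ℝ → ℝ} (hA : ContDiff ℝ (⊤ : ℕ∞) A) (hB : ContDiff ℝ (⊤ : ℕ∞) B)
    (hC : ContDiff ℝ (⊤ : ℕ∞) C) (c d : ℝ) (e p : ℝ × ℝ) :
    pd e (fun q => A q - c * B q + d * C q) p
      = pd e A p - c * pd e B p + d * pd e C p := by
  have h : HasFDerivAt (fun q => A q - c * B q + d * C q)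
      ((fderiv ℝ A p - c • fderiv ℝ B p) + d • fderiv ℝ C p) p :=
    (((hA.differentiable (by simp) p).hasFDerivAt).sub
      (((hB.differentiable (by simp) p).hasFDerivAt).const_smul c)).add
      (((hC.differentiable (by simp) p).hasFDerivAt).const_smul d)
  simp only [pd]
  rw [h.fderiv]
  simp [smul_eq_mul]

theorem mindlin_riemann_invariant_system_iff
    (a₁ a₂ a₃ a₄ a₅ : ℝ) (h1 : 0 < a₁) (h3 : 0 < a₃)
    (c₁ c₂ : ℝ)
    (hc₁ : c₁ = -a₂ / (Real.sqrt a₁ + Real.sqrt a₃))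
    (hc₂ : c₂ = a₄ / (Real.sqrt a₁ + Real.sqrt a₃))
    (u χ : ℝ → ℝ → ℝ)
    (hu : ContDiff ℝ (⊤ : ℕ∞) (Function.uncurry u)) (hχ : ContDiff ℝ (⊤ : ℕ∞) (Function.uncurry χ))
    (v w : ℝ → ℝ → ℝ)
    (hv : ∀ t x, v t x = (dt u t x - Real.sqrt a₁ * dx u t x) + c₁ * χ t x)
    (hw : ∀ t x, w t x = (dt χ t x - Real.sqrt a₃ * dx χ t x) + c₂ * u t x) :
    ((∀ t x, dt (dt u) t x = a₁ * dx (dx u) t x + a₂ * dx χ t x) ∧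
     (∀ t x, dt (dt χ) t x = a₃ * dx (dx χ) t x - a₄ * dx u t x - a₅ * χ t x)) ↔
    ((∀ t x, dt u t x = Real.sqrt a₁ * dx u t x - c₁ * χ t x + v t x) ∧
     (∀ t x, dt χ t x = Real.sqrt a₃ * dx χ t x - c₂ * u t x + w t x) ∧
     (∀ t x, dt v t x = -Real.sqrt a₁ * dx v t x - c₁ * c₂ * u t x + c₁ * w t x) ∧
     (∀ t x, dt w t x = -Real.sqrt a₃ * dx w t x - (c₁ * c₂ + a₅) * χ t x + c₂ * v t x)) := by
  set s1 := Real.sqrt a₁ with hs1def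
  set s3 := Real.sqrt a₃ with hs3def
  have hs1 : s1 * s1 = a₁ := Real.mul_self_sqrt h1.le
  have hs3 : s3 * s3 = a₃ := Real.mul_self_sqrt h3.le
  have hspos : 0 < s1 + s3 := by positivity
  have hsne : s1 + s3 ≠ 0 := hspos.ne'
  have hc₁' : c₁ * (s1 + s3) = -a₂ := by rw [hc₁]; field_simp
  have hc₂' : c₂ * (s1 + s3) = a₄ := by rw [hc₂]; field_simp
  set U := uncurry u with hUdef
  set X := uncurry χ with hXdef
  -- first-order derivatives of u, χ as pd
  have hdtu : ∀ t x, dt u t x = pd (1,0) U (t,x) := dt_eq hu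
  have hdxu : ∀ t x, dx u t x = pd (0,1) U (t,x) := dx_eq hu
  have hdtχ : ∀ t x, dt χ t x = pd (1,0) X (t,x) := dt_eq hχ
  have hdxχ : ∀ t x, dx χ t x = pd (0,1) X (t,x) := dx_eq hχ
  -- uncurried first derivatives
  have hUtu : uncurry (dt u) = pd (1,0) U := funext fun p => hdtu p.1 p.2
  have hUxu : uncurry (dx u) = pd (0,1) U := funext fun p => hdxu p.1 p.2
  have hUtχ : uncurry (dt χ) = pd (1,0) X := funext fun p => hdtχ p.1 p.2
  have hUxχ : uncurry (dx χ) = pd (0,1) X := funext fun p => hdxχ p.1 p.2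
  have hctu : ContDiff ℝ (⊤ : ℕ∞) (uncurry (dt u)) := hUtu ▸ pd_contDiff hu _
  have hcxu : ContDiff ℝ (⊤ : ℕ∞) (uncurry (dx u)) := hUxu ▸ pd_contDiff hu _
  have hctχ : ContDiff ℝ (⊤ : ℕ∞) (uncurry (dt χ)) := hUtχ ▸ pd_contDiff hχ _
  have hcxχ : ContDiff ℝ (⊤ : ℕ∞) (uncurry (dx χ)) := hUxχ ▸ pd_contDiff hχ _
  -- second derivatives
  have hdtdtu : ∀ t x, dt (dt u) t x = pd (1,0) (pd (1,0) U) (t,x) := by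
    intro t x; rw [dt_eq hctu, hUtu]
  have hdxdxu : ∀ t x, dx (dx u) t x = pd (0,1) (pd (0,1) U) (t,x) := by
    intro t x; rw [dx_eq hcxu, hUxu]
  have hdtdtχ : ∀ t x, dt (dt χ) t x = pd (1,0) (pd (1,0) X) (t,x) := by
    intro t x; rw [dt_eq hctχ, hUtχ]
  have hdxdxχ : ∀ t x, dx (dx χ) t x = pd (0,1) (pd (0,1) X) (t,x) := by
    intro t x; rw [dx_eq hcxχ, hUxχ]
  -- v and w uncurried
  have hVdef : uncurry v = fun q => pd (1,0) U q - s1 * pd (0,1) U q + c₁ * X q := by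
    funext p
    have := hv p.1 p.2
    rw [hdtu, hdxu] at this
    exact this
  have hWdef : uncurry w = fun q => pd (1,0) X q - s3 * pd (0,1) X q + c₂ * U q := by
    funext p
    have := hw p.1 p.2
    rw [hdtχ, hdxχ] at this
    exact this
  have hVc : ContDiff ℝ (⊤ : ℕ∞) (uncurry v) := by
    rw [hVdef]
    exact ((pd_contDiff hu _).sub ((pd_contDiff hu _).const_smul s1)).add (hχ.const_smul c₁)
  have hWc : ContDiff ℝ (⊤ : ℕ∞) (uncurry w) := by
    rw [hWdef]
    exact ((pd_contDiff hχ _).sub ((pd_contDiff hχ _).const_smul s3)).add (hu.const_smul c₂)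
  have hdtv : ∀ t x, dt v t x
      = pd (1,0) (pd (1,0) U) (t,x) - s1 * pd (1,0) (pd (0,1) U) (t,x) + c₁ * pd (1,0) X (t,x) := by
    intro t x
    rw [dt_eq hVc, hVdef, pd_comb (pd_contDiff hu _) (pd_contDiff hu _) hχ]
  have hdxv : ∀ t x, dx v t x
      = pd (0,1) (pd (1,0) U) (t,x) - s1 * pd (0,1) (pd (0,1) U) (t,x) + c₁ * pd (0,1) X (t,x) := by
    intro t x
    rw [dx_eq hVc, hVdef, pd_comb (pd_contDiff hu _) (pd_contDiff hu _) hχ]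
  have hdtw : ∀ t x, dt w t x
      = pd (1,0) (pd (1,0) X) (t,x) - s3 * pd (1,0) (pd (0,1) X) (t,x) + c₂ * pd (1,0) U (t,x) := by
    intro t x
    rw [dt_eq hWc, hWdef, pd_comb (pd_contDiff hχ _) (pd_contDiff hχ _) hu]
  have hdxw : ∀ t x, dx w t x
      = pd (0,1) (pd (1,0) X) (t,x) - s3 * pd (0,1) (pd (0,1) X) (t,x) + c₂ * pd (0,1) U (t,x) := by
    intro t x
    rw [dx_eq hWc, hWdef, pd_comb (pd_contDiff hχ _) (pd_contDiff hχ _) hu]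
  have hcommu : ∀ p, pd (0,1) (pd (1,0) U) p = pd (1,0) (pd (0,1) U) p :=
    pd_comm hu _ _
  have hcommχ : ∀ p, pd (0,1) (pd (1,0) X) p = pd (1,0) (pd (0,1) X) p :=
    pd_comm hχ _ _
  have hUval : ∀ t x, u t x = U (t,x) := fun _ _ => rfl
  have hXval : ∀ t x, χ t x = X (t,x) := fun _ _ => rfl
  constructor
  · rintro ⟨hA, hB⟩
    refine ⟨fun t x => by rw [hv]; ring, fun t x => by rw [hw]; ring, ?_, ?_⟩
    · intro t x
      have hA' := hA t x
      rw [hdtdtu, hdxdxu, hdxχ] at hA'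
      rw [hdtv t x, hdxv t x, hw t x, hdtχ, hdxχ, hcommu]
      linear_combination hA' + pd (0,1) X (t,x) * hc₁' - pd (0,1) (pd (0,1) U) (t,x) * hs1
    · intro t x
      have hB' := hB t x
      rw [hdtdtχ, hdxdxχ, hdxu, hXval] at hB'
      rw [hdtw t x, hdxw t x, hv t x, hdtu, hdxu, hcommχ]
      have hXp : X (t,x) = χ t x := rfl
      linear_combination hB' + pd (0,1) U (t,x) * hc₂' - pd (0,1) (pd (0,1) X) (t,x) * hs3
        - a₅ * hXp
  · rintro ⟨-, -, h3', h4'⟩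
    constructor
    · intro t x
      have h3'' := h3' t x
      rw [hdtv t x, hdxv t x, hw t x, hdtχ, hdxχ, hcommu] at h3''
      rw [hdtdtu, hdxdxu, hdxχ]
      linear_combination h3'' - pd (0,1) X (t,x) * hc₁' + pd (0,1) (pd (0,1) U) (t,x) * hs1
    · intro t x
      have h4'' := h4' t x
      rw [hdtw t x, hdxw t x, hv t x, hdtu, hdxu, hcommχ] at h4''
      rw [hdtdtχ, hdxdxχ, hdxu]
      linear_combination h4'' - pd (0,1) U (t,x) * hc₂' + pd (0,1) (pd (0,1) X) (t,x) * hs3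
end
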